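/- Let G be a finite simple graph containing no theta, pyramid, prism, or turtle as an induced subgraph, let H be a hole in G, let v be a major vertex for H, and let u be a clone of y in H with uv ∈ E(G). If yv ∉ E(G), then u and v have a common neighbor in H. -/

import Mathlib

namespace Paper

open SimpleGraph

variable {V : Type*}

/-- The set of neighbors of `v` inside the set `H`. -/
def nbrsIn (G : SimpleGraph V) (v : V) (H : Set V) : Set V :=
  {u | u ∈ H ∧ G.Adj v u}

/-- The vertex set of a walk. -/
def supp {G : SimpleGraph V} {a b : V} (P : G.Walk a b) : Set V :=
  {v | v ∈ P.support}

/-- `H` is a hole of `G`: an induced cycle of length at least 4.  (A finite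
graph is a cycle iff it is connected and `2`-regular.) -/
def IsHole (G : SimpleGraph V) (H : Set V) : Prop :=
  H.Finite ∧ 4 ≤ H.ncard ∧ (G.induce H).Connected ∧
    ∀ v ∈ H, (nbrsIn G v H).ncard = 2

/-- `G` contains a theta as an induced subgraph. -/
def HasTheta (G : SimpleGraph V) : Prop :=
  ∃ (a b : V) (P₁ P₂ P₃ : G.Walk a b),
    a ≠ b ∧ ¬ G.Adj a b ∧
    P₁.IsPath ∧ P₂.IsPath ∧ P₃.IsPath ∧
    2 ≤ P₁.length ∧ 2 ≤ P₂.length ∧ 2 ≤ P₃.length ∧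
    (∀ v, v ∈ P₁.support → v ∈ P₂.support → v = a ∨ v = b) ∧
    (∀ v, v ∈ P₁.support → v ∈ P₃.support → v = a ∨ v = b) ∧
    (∀ v, v ∈ P₂.support → v ∈ P₃.support → v = a ∨ v = b) ∧
    IsHole G (supp P₁ ∪ supp P₂) ∧
    IsHole G (supp P₁ ∪ supp P₃) ∧
    IsHole G (supp P₂ ∪ supp P₃)

/-- `G` contains a pyramid as an induced subgraph. -/
def HasPyramid (G : SimpleGraph V) : Prop :=
  ∃ (a b₁ b₂ b₃ : V) (P₁ : G.Walk a b₁) (P₂ : G.Walk a b₂) (P₃ : G.Walk a b₃),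
    G.Adj b₁ b₂ ∧ G.Adj b₂ b₃ ∧ G.Adj b₁ b₃ ∧
    P₁.IsPath ∧ P₂.IsPath ∧ P₃.IsPath ∧
    (∀ v, v ∈ P₁.support → v ∈ P₂.support → v = a) ∧
    (∀ v, v ∈ P₁.support → v ∈ P₃.support → v = a) ∧
    (∀ v, v ∈ P₂.support → v ∈ P₃.support → v = a) ∧
    ¬ (P₁.length = 1 ∧ P₂.length = 1) ∧
    ¬ (P₁.length = 1 ∧ P₃.length = 1) ∧
    ¬ (P₂.length = 1 ∧ P₃.length = 1) ∧
    IsHole G (supp P₁ ∪ supp P₂) ∧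
    IsHole G (supp P₁ ∪ supp P₃) ∧
    IsHole G (supp P₂ ∪ supp P₃)

/-- `G` contains a prism as an induced subgraph. -/
def HasPrism (G : SimpleGraph V) : Prop :=
  ∃ (a₁ a₂ a₃ b₁ b₂ b₃ : V) (P₁ : G.Walk a₁ b₁) (P₂ : G.Walk a₂ b₂)
      (P₃ : G.Walk a₃ b₃),
    G.Adj a₁ a₂ ∧ G.Adj a₂ a₃ ∧ G.Adj a₁ a₃ ∧
    G.Adj b₁ b₂ ∧ G.Adj b₂ b₃ ∧ G.Adj b₁ b₃ ∧
    P₁.IsPath ∧ P₂.IsPath ∧ P₃.IsPath ∧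
    (∀ v, v ∈ P₁.support → v ∉ P₂.support) ∧
    (∀ v, v ∈ P₁.support → v ∉ P₃.support) ∧
    (∀ v, v ∈ P₂.support → v ∉ P₃.support) ∧
    IsHole G (supp P₁ ∪ supp P₂) ∧
    IsHole G (supp P₁ ∪ supp P₃) ∧
    IsHole G (supp P₂ ∪ supp P₃)

/-- `G` contains a turtle as an induced subgraph. -/
def HasTurtle (G : SimpleGraph V) : Prop :=
  ∃ (a₁ b₁ a₂ b₂ x y : V) (P₁ : G.Walk a₁ b₁) (P₂ : G.Walk a₂ b₂),
    P₁.IsPath ∧ P₂.IsPath ∧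
    (∀ v, v ∈ P₁.support → v ∉ P₂.support) ∧
    G.Adj a₁ a₂ ∧ G.Adj b₁ b₂ ∧ G.Adj x y ∧
    x ∉ P₁.support ∧ x ∉ P₂.support ∧ y ∉ P₁.support ∧ y ∉ P₂.support ∧
    IsHole G (supp P₁ ∪ supp P₂) ∧
    3 ≤ (nbrsIn G x (supp P₁)).ncard ∧
    (∀ v ∈ P₂.support, ¬ G.Adj x v) ∧
    3 ≤ (nbrsIn G y (supp P₂)).ncard ∧
    (∀ v ∈ P₁.support, ¬ G.Adj y v)

/-- `G` contains no theta, pyramid, prism, or turtle as an induced subgraph. -/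
def TPPTFree (G : SimpleGraph V) : Prop :=
  ¬ HasTheta G ∧ ¬ HasPyramid G ∧ ¬ HasPrism G ∧ ¬ HasTurtle G

/-- The neighborhood of a set `X`: all vertices outside `X` with a neighbor in `X`. -/
def setNbrs (G : SimpleGraph V) (X : Set V) : Set V :=
  {v | v ∉ X ∧ ∃ x ∈ X, G.Adj x v}

/-- `A` is a connected component of `G ∖ C`. -/
def IsCompOf (G : SimpleGraph V) (C A : Set V) : Prop :=
  A.Nonempty ∧ Disjoint A C ∧ (G.induce A).Connected ∧
    ∀ a ∈ A, ∀ b : V, G.Adj a b → b ∉ C → b ∈ A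

/-- `C` is a minimal separator of `G`: there are two distinct components `L`, `R`
of `G ∖ C` with `N(L) = N(R) = C`. -/
def IsMinSep (G : SimpleGraph V) (C : Set V) : Prop :=
  ∃ L R : Set V, IsCompOf G C L ∧ IsCompOf G C R ∧ L ≠ R ∧
    setNbrs G L = C ∧ setNbrs G R = C

/-- A proper separator: a minimal separator that is not a clique. -/
def IsProperSep (G : SimpleGraph V) (C : Set V) : Prop :=
  IsMinSep G C ∧ ¬ (∀ a ∈ C, ∀ b ∈ C, a ≠ b → G.Adj a b)

/-- `u` is a minor vertex for the hole `H`: `u ∉ H`, `u` has a neighbor in `H` and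
all its neighbors in `H` lie in a path of `H` with at most three vertices. -/
def IsMinorFor (G : SimpleGraph V) (u : V) (H : Set V) : Prop :=
  u ∉ H ∧ (nbrsIn G u H).Nonempty ∧
    ∃ a b c : V, a ∈ H ∧ b ∈ H ∧ c ∈ H ∧ G.Adj a b ∧ G.Adj b c ∧ a ≠ c ∧
      nbrsIn G u H ⊆ {a, b, c}

/-- `u` is a major vertex for the hole `H`. -/
def IsMajorFor (G : SimpleGraph V) (u : V) (H : Set V) : Prop :=
  u ∉ H ∧ (nbrsIn G u H).Nonempty ∧ ¬ IsMinorFor G u H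

/-- `u` is a pendant of `H`: it has a unique neighbor in `H`. -/
def IsPendant (G : SimpleGraph V) (u : V) (H : Set V) : Prop :=
  u ∉ H ∧ ∃ a : V, nbrsIn G u H = {a}

/-- `u` is a cap of `H`: it has exactly two neighbors in `H` and they are adjacent. -/
def IsCap (G : SimpleGraph V) (u : V) (H : Set V) : Prop :=
  u ∉ H ∧ ∃ a b : V, a ≠ b ∧ G.Adj a b ∧ nbrsIn G u H = {a, b}

/-- `u` is a clone of `y` in `H`: its neighbors in `H` are exactly the three
vertices of a path `x-y-z` of `H`. -/
def IsCloneOf (G : SimpleGraph V) (u y : V) (H : Set V) : Prop :=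
  u ∉ H ∧ ∃ x z : V, x ∈ H ∧ y ∈ H ∧ z ∈ H ∧ G.Adj x y ∧ G.Adj y z ∧ x ≠ z ∧
    nbrsIn G u H = {x, y, z}

/-- `u` is a clone (of some vertex) in `H`. -/
def IsClone (G : SimpleGraph V) (u : V) (H : Set V) : Prop :=
  ∃ y, IsCloneOf G u y H

/-- `P` is a `u`-sector of the hole `H`: a path contained in `H` whose ends are
neighbors of `u` and whose interior is anticomplete to `u`. -/
def IsSector (G : SimpleGraph V) (u : V) (H : Set V) {a b : V} (P : G.Walk a b) : Prop :=
  P.IsPath ∧ (∀ v ∈ P.support, v ∈ H) ∧ G.Adj u a ∧ G.Adj u b ∧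
    ∀ v ∈ P.support, v ≠ a → v ≠ b → ¬ G.Adj u v

/-- `u` and `v` are nested with respect to the hole `H`: there are distinct
`a, b ∈ H` such that one `ab`-path of `H` contains all neighbors of `u` in `H`
and the other `ab`-path of `H` contains all neighbors of `v` in `H`. -/
def Nested (G : SimpleGraph V) (u v : V) (H : Set V) : Prop :=
  ∃ a b : V, a ∈ H ∧ b ∈ H ∧ a ≠ b ∧
    ∃ (P Q : G.Walk a b), P.IsPath ∧ Q.IsPath ∧
      supp P ∪ supp Q = H ∧
      (∀ x, x ∈ P.support → x ∈ Q.support → x = a ∨ x = b) ∧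
      (∀ x ∈ H, G.Adj u x → x ∈ P.support) ∧
      (∀ x ∈ H, G.Adj v x → x ∈ Q.support)

/-- `u` is a hub for the hole `H`: its neighbors in `H` are exactly four vertices
`p, q, r, s` appearing in that order along `H`, with `pq, rs ∈ E(G)` and
`ps, qr ∉ E(G)`. -/
def IsHub (G : SimpleGraph V) (u : V) (H : Set V) : Prop :=
  u ∉ H ∧ ∃ (p q r s : V) (A : G.Walk q r) (B : G.Walk s p),
    p ≠ q ∧ p ≠ r ∧ p ≠ s ∧ q ≠ r ∧ q ≠ s ∧ r ≠ s ∧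
    nbrsIn G u H = {p, q, r, s} ∧
    G.Adj p q ∧ G.Adj r s ∧ ¬ G.Adj p s ∧ ¬ G.Adj q r ∧
    A.IsPath ∧ B.IsPath ∧
    (∀ v, v ∈ A.support → v ∉ B.support) ∧
    supp A ∪ supp B = H

/-- `N` is an extended neighborhood of `w` in the hole `H`. -/
def IsExtNbhd (G : SimpleGraph V) (w : V) (H N : Set V) : Prop :=
  ∃ (x y x' y' : V) (Q : G.Walk x y),
    IsSector G w H Q ∧
    x' ∈ H ∧ x' ∉ Q.support ∧ G.Adj x' x ∧
    y' ∈ H ∧ y' ∉ Q.support ∧ G.Adj y' y ∧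
    N = supp Q ∪ ({x', y'} ∩ nbrsIn G w H)

/-- `a` and `b` are distant in `H` with respect to `w`: no extended neighborhood
of `w` in `H` contains both `a` and `b`. -/
def Distant (G : SimpleGraph V) (w : V) (H : Set V) (a b : V) : Prop :=
  a ∈ H ∧ b ∈ H ∧ ∀ N : Set V, IsExtNbhd G w H N → ¬ (a ∈ N ∧ b ∈ N)

/-- `P` is an `(H, w)`-significant path. -/
def IsSignificant (G : SimpleGraph V) (w : V) (H : Set V) {p q : V}
    (P : G.Walk p q) : Prop :=
  P.IsPath ∧ ∃ a b : V, a ∈ H ∧ G.Adj p a ∧ ¬ G.Adj w a ∧ b ∈ H ∧ G.Adj q b ∧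
    Distant G w H a b

/-- `v` is a gem-center for the hole `H`. -/
def IsGemCenter (G : SimpleGraph V) (v : V) (H : Set V) : Prop :=
  5 ≤ H.ncard ∧ ∃ h₁ h₂ h₃ h₄ : V, h₁ ∈ H ∧ h₂ ∈ H ∧ h₃ ∈ H ∧ h₄ ∈ H ∧
    G.Adj h₁ h₂ ∧ G.Adj h₂ h₃ ∧ G.Adj h₃ h₄ ∧ h₁ ≠ h₃ ∧ h₁ ≠ h₄ ∧ h₂ ≠ h₄ ∧
    nbrsIn G v H = {h₁, h₂, h₃, h₄}

/-- `x` is the center of a star cutset of `G`. -/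
def IsStarCutsetCenter (G : SimpleGraph V) (x : V) : Prop :=
  ∃ X : Set V, x ∈ X ∧ (∀ y ∈ X, y ≠ x → G.Adj x y) ∧
    ¬ (G.induce (Xᶜ)).Preconnected

/-- `v` is `(c₁, c₂)`-heavy with respect to the hole `H`. -/
def IsHeavy (G : SimpleGraph V) (c₁ c₂ : V) (H : Set V) (v : V) : Prop :=
  IsMajorFor G v H ∧ Distant G v H c₁ c₂

/-- The pair of paths `HL`, `HR` forms a `(C, c₁, c₂)`-hole with frame
`(c₁, c₂, ℓ₁', ℓ₁, r₁, r₁', ℓ₂', ℓ₂, r₂, r₂')`, where `L` and `R` are the two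
full components of the proper separator `C`. -/
def IsCHoleWithFrame (G : SimpleGraph V) (C L R : Set V)
    (c₁ c₂ ℓ₁ ℓ₁' ℓ₂ ℓ₂' r₁ r₁' r₂ r₂' : V) (HL HR : G.Walk c₁ c₂) : Prop :=
  HL.IsPath ∧ HR.IsPath ∧
  (∀ v, v ∈ HL.support → v ∈ HR.support → v = c₁ ∨ v = c₂) ∧
  IsHole G (supp HL ∪ supp HR) ∧
  c₁ ∈ C ∧ c₂ ∈ C ∧
  (∀ v, v ∈ HL.support → v ≠ c₁ → v ≠ c₂ → v ∈ L) ∧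
  (∀ v, v ∈ HR.support → v ≠ c₁ → v ≠ c₂ → v ∈ R) ∧
  (supp HL ∪ supp HR) ∩ C = {c₁, c₂} ∧
  ℓ₁ ∈ HL.support ∧ ℓ₁ ≠ c₂ ∧ G.Adj c₁ ℓ₁ ∧
  ℓ₂ ∈ HL.support ∧ ℓ₂ ≠ c₁ ∧ G.Adj c₂ ℓ₂ ∧
  r₁ ∈ HR.support ∧ r₁ ≠ c₂ ∧ G.Adj c₁ r₁ ∧
  r₂ ∈ HR.support ∧ r₂ ≠ c₁ ∧ G.Adj c₂ r₂ ∧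
  ((ℓ₁ = ℓ₂ ∧ ℓ₁' = ℓ₁) ∨
    (ℓ₁ ≠ ℓ₂ ∧ ℓ₁' ∈ HL.support ∧ ℓ₁' ≠ c₁ ∧ ℓ₁' ≠ c₂ ∧ G.Adj ℓ₁ ℓ₁')) ∧
  ((ℓ₁ = ℓ₂ ∧ ℓ₂' = ℓ₂) ∨
    (ℓ₁ ≠ ℓ₂ ∧ ℓ₂' ∈ HL.support ∧ ℓ₂' ≠ c₁ ∧ ℓ₂' ≠ c₂ ∧ G.Adj ℓ₂ ℓ₂')) ∧
  ((r₁ = r₂ ∧ r₁' = r₁) ∨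
    (r₁ ≠ r₂ ∧ r₁' ∈ HR.support ∧ r₁' ≠ c₁ ∧ r₁' ≠ c₂ ∧ G.Adj r₁ r₁')) ∧
  ((r₁ = r₂ ∧ r₂' = r₂) ∨
    (r₁ ≠ r₂ ∧ r₂' ∈ HR.support ∧ r₂' ≠ c₁ ∧ r₂' ≠ c₂ ∧ G.Adj r₂ r₂'))

/-- The 3-dimensional hypercube graph: vertices are elements of `{0,1}³`, two
vertices being adjacent exactly when they differ in one coordinate. -/
def cubeGraph : SimpleGraph (Fin 3 → Bool) where
  Adj x y := ∃! i, x i ≠ y i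
  symm := by
    constructor
    rintro x y ⟨i, hi, hj⟩
    exact ⟨i, Ne.symm hi, fun j h => hj j (Ne.symm h)⟩
  loopless := by
    constructor
    rintro x ⟨i, hi, -⟩
    exact hi rfl

/-! If `u` and `v` had no common neighbour in `H`, then `v` would miss all three neighbours
`x, y, z` of `u` in `H`. If `v` has at least three neighbours in `H`, the path `x-y-z` (seen
by `u`) and the rest of `H` (seen by `v`) form a turtle. Otherwise, `v` being major, its
neighbours in `H` are exactly two nonadjacent vertices `p, q`, and the two arcs of `H` between
them together with the path `p-v-q` form a theta.

Throughout, a hole is identified with the vertex set of a chordless cycle of length at least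
four. -/

section

open Walk

variable {G : SimpleGraph V}

def InternallyDisjoint {p q : V} (A B : G.Walk p q) : Prop :=
  ∀ w, w ∈ A.support → w ∈ B.support → w = p ∨ w = q

lemma InternallyDisjoint.symm {p q : V} {A B : G.Walk p q} (h : InternallyDisjoint A B) :
    InternallyDisjoint B A := fun w hB hA => h w hA hB

lemma supp_append {a b c : V} (A : G.Walk a b) (B : G.Walk b c) :
    supp (A.append B) = supp A ∪ supp B := by
  ext w; simp [supp, mem_support_append_iff]

lemma supp_reverse {a b : V} (A : G.Walk a b) : supp A.reverse = supp A := by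
  ext w; simp [supp]

lemma supp_copy {a b a' b' : V} (A : G.Walk a b) (ha : a = a') (hb : b = b') :
    supp (A.copy ha hb) = supp A := by
  subst ha hb; rfl

lemma support_eq_cons_tail_dropLast {a b : V} {R : G.Walk a b} (hR : 2 ≤ R.length) :
    R.support = a :: (R.tail.dropLast.support ++ [b]) := by
  have hn : ¬ R.Nil := by rw [← length_eq_zero_iff]; omega
  have hnt : ¬ R.tail.Nil := by rw [← length_eq_zero_iff, length_tail]; omega
  rw [support_dropLast_concat hnt, cons_support_tail hn]

lemma two_le_length_of_not_adj {p q : V} (P : G.Walk p q) (hpq : p ≠ q) (h : ¬ G.Adj p q) :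
    2 ≤ P.length := by
  rcases P with _ | ⟨h₁, _ | ⟨h₂, P⟩⟩
  · exact absurd rfl hpq
  · exact absurd h₁ h
  · simp

lemma IsPath.ncard_supp {a b : V} {P : G.Walk a b} (hP : P.IsPath) :
    (supp P).ncard = P.length + 1 := by
  classical
  have : supp P = ↑P.support.toFinset := by ext; simp [supp]
  rw [this, Set.ncard_coe_finset, List.toFinset_card_of_nodup hP.support_nodup, length_support]

lemma IsPath.mem_support_tail_dropLast {a b w : V} {R : G.Walk a b} (hR : R.IsPath)
    (hlen : 2 ≤ R.length) : w ∈ R.tail.dropLast.support ↔ w ∈ R.support ∧ w ≠ a ∧ w ≠ b := by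
  have hsplit := support_eq_cons_tail_dropLast hlen
  have hnd := hR.support_nodup
  rw [hsplit, List.nodup_cons, List.nodup_append] at hnd
  rw [hsplit]
  simp only [List.mem_cons, List.mem_append]
  refine ⟨fun h => ⟨Or.inr (Or.inl h), fun hwa => hnd.1 (by simp [← hwa, h]),
    fun hwb => hnd.2.2.2 w h w (by simp [hwb]) rfl⟩, fun ⟨h, hwa, hwb⟩ => by tauto⟩

lemma isPath_cons_cons_nil {p q v : V} (hpv : G.Adj p v) (hvq : G.Adj v q) (hpq : p ≠ q) :
    (cons hpv (cons hvq nil)).IsPath := by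
  simp [hpq, hpv.ne, hvq.ne]

lemma internallyDisjoint_cons_cons_nil {p q v : V} {A : G.Walk p q} (hvA : v ∉ A.support)
    (hpv : G.Adj p v) (hvq : G.Adj v q) : InternallyDisjoint A (cons hpv (cons hvq nil)) :=
  fun w hw hwP => by
    simp only [support_cons, support_nil, List.mem_cons, List.not_mem_nil, or_false] at hwP
    rcases hwP with rfl | rfl | rfl
    · exact Or.inl rfl
    · exact absurd hw hvA
    · exact Or.inr rfl

lemma isCycle_append_reverse {p q : V} {A B : G.Walk p q} (hA : A.IsPath) (hB : B.IsPath)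
    (hAB : InternallyDisjoint A B) (hlen : 2 ≤ A.length) : (A.append B.reverse).IsCycle := by
  refine hA.isCycle_append hB.reverse (fun w hwA hwB => ?_) (by omega)
  have hpA : p ∉ A.support.tail := by
    have := hA.support_nodup
    rw [← cons_tail_support, List.nodup_cons] at this
    exact this.1
  have hqB : q ∉ B.reverse.support.tail := by
    have := hB.reverse.support_nodup
    rw [← cons_tail_support, List.nodup_cons] at this
    exact this.1
  rcases hAB w (List.mem_of_mem_tail hwA)
    (by simpa using List.mem_of_mem_tail hwB) with rfl | rfl
  · exact hpA hwA
  · exact hqB hwB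

lemma IsCycle.mem_support_tail_dropLast {y w : V} {c : G.Walk y y} (hc : c.IsCycle) :
    w ∈ c.tail.dropLast.support ↔ w ∈ c.support ∧ w ≠ y := by
  have hsplit := support_eq_cons_tail_dropLast (by have := hc.three_le_length; omega : 2 ≤ c.length)
  have hnd := hc.support_nodup
  rw [hsplit, List.tail_cons, List.nodup_append] at hnd
  rw [hsplit]
  simp only [List.mem_cons, List.mem_append]
  exact ⟨fun h => ⟨Or.inr (Or.inl h), fun hwy => hnd.2.2 w h w (by simp [hwy]) rfl⟩,
    fun ⟨h, hwy⟩ => by tauto⟩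

lemma IsCycle.penultimate_tail {y : V} {c : G.Walk y y} (hc : c.IsCycle) :
    c.tail.penultimate = c.penultimate := by
  conv_rhs => rw [← c.cons_tail_eq hc.not_nil]
  rw [penultimate_cons_of_not_nil _ _ (by
    rw [← length_eq_zero_iff, length_tail]; have := hc.three_le_length; omega)]

lemma toSubgraph_neighborSet_subset_nbrsIn {a b : V} (P : G.Walk a b) (w : V) :
    P.toSubgraph.neighborSet w ⊆ nbrsIn G w (supp P) := fun _ h =>
  ⟨(mem_verts_toSubgraph P).mp (P.toSubgraph.edge_vert h.symm), h.adj_sub⟩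

lemma nbrsIn_supp_eq_of_isChordless {a b : V} {P : G.Walk a b} (hP : P.IsChordless) {w : V}
    (hw : w ∈ P.support) : nbrsIn G w (supp P) = P.toSubgraph.neighborSet w := by
  refine subset_antisymm (fun _ ⟨hw', hadj⟩ => ?_) (toSubgraph_neighborSet_subset_nbrsIn P w)
  exact adj_toSubgraph_iff_mem_edges.mpr (hP.mem_edges hw hw' hadj)

lemma IsCycle.isHole_supp {a : V} {c : G.Walk a a} (hc : c.IsCycle) (hch : c.IsChordless)
    (h4 : 4 ≤ (supp c).ncard) : IsHole G (supp c) :=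
  ⟨c.support.finite_toSet, h4, c.connected_induce_support, fun _ hw => by
    rw [nbrsIn_supp_eq_of_isChordless hch hw]; exact hc.ncard_neighborSet_toSubgraph_eq_two hw⟩

lemma IsHole.isChordless {a : V} {c : G.Walk a a} (hH : IsHole G (supp c)) (hc : c.IsCycle) :
    c.IsChordless := by
  refine isChordless_iff_forall_mem_edges.mpr fun w w' hw hw' hadj => ?_
  have heq := Set.eq_of_subset_of_ncard_le (toSubgraph_neighborSet_subset_nbrsIn c w)
    (by rw [hH.2.2.2 w hw, hc.ncard_neighborSet_toSubgraph_eq_two hw])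
    (hH.1.subset fun _ h => h.1)
  have : w' ∈ c.toSubgraph.neighborSet w := heq ▸ ⟨hw', hadj⟩
  exact adj_toSubgraph_iff_mem_edges.mp this

lemma IsHole.isCycles_induce {H : Set V} (hH : IsHole G H) : (G.induce H).IsCycles := by
  rintro ⟨w, hw⟩ -
  rw [← hH.2.2.2 w hw, ← Set.ncard_image_of_injective _ Subtype.val_injective]
  congr 1
  ext w'
  simp [nbrsIn, and_comm]

lemma IsHole.exists_isCycle {H : Set V} (hH : IsHole G H) {y : V} (hy : y ∈ H) :
    ∃ c : G.Walk y y, c.IsCycle ∧ supp c = H := by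
  have : Finite H := hH.1
  obtain ⟨n, hn, hyn⟩ := Set.nonempty_of_ncard_ne_zero (s := nbrsIn G y H)
    (by rw [hH.2.2.2 y hy]; simp)
  obtain ⟨c, hc, hverts⟩ :=
    hH.isCycles_induce.exists_cycle_toSubgraph_verts_eq_connectedComponentSupp
      (c := (G.induce H).connectedComponentMk ⟨y, hy⟩) rfl ⟨⟨n, hn⟩, hyn⟩
  let f := (Embedding.induce (G := G) H).toHom
  have hsupp : (c.map f).support = c.support.map Subtype.val := Walk.support_map _ _
  refine ⟨c.map f, (isCycle_map_iff_of_injective (f := f) Subtype.val_injective).mpr hc, ?_⟩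
  ext w
  change w ∈ (c.map f).support ↔ _
  rw [hsupp, List.mem_map]
  refine ⟨fun ⟨w', _, hw'⟩ => hw' ▸ w'.2, fun hw => ⟨⟨w, hw⟩, ?_, rfl⟩⟩
  rw [← mem_verts_toSubgraph, hverts, ConnectedComponent.mem_supp_iff, ConnectedComponent.eq]
  exact hH.2.2.1.preconnected _ _

lemma IsHole.exists_arcs {H : Set V} (hH : IsHole G H) {p q : V} (hp : p ∈ H) (hq : q ∈ H)
    (hpq : p ≠ q) :
    ∃ A B : G.Walk p q, A.IsPath ∧ B.IsPath ∧ InternallyDisjoint A B ∧ supp A ∪ supp B = H := by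
  classical
  obtain ⟨c, hc, rfl⟩ := hH.exists_isCycle hp
  set A := c.takeUntil q hq
  set D := c.dropUntil q hq
  have hspec : A.append D = c := c.take_spec hq
  have hD : D.IsPath :=
    (hspec ▸ hc : (A.append D).IsCycle).isPath_of_append_right (not_nil_of_ne hpq)
  refine ⟨A, D.reverse, hc.isPath_takeUntil hq, hD.reverse, fun w hwA hwD => ?_, ?_⟩
  · have htail := hc.support_nodup
    rw [← hspec, tail_support_append, List.nodup_append'] at htail
    rw [support_reverse, List.mem_reverse] at hwD
    rcases (mem_support_iff _).mp hwA with h | hwA'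
    · exact Or.inl h
    rcases (mem_support_iff _).mp hwD with h | hwD'
    · exact Or.inr h
    · exact absurd hwD' (htail.2.2 hwA')
  · rw [supp_reverse, ← supp_append, hspec]

lemma IsHole.exists_isPath_supp_eq_diff {H : Set V} (hH : IsHole G H) {x y z : V} (hy : y ∈ H)
    (hx : x ∈ nbrsIn G y H) (hz : z ∈ nbrsIn G y H) (hxz : x ≠ z) :
    ∃ R : G.Walk x z, R.IsPath ∧ supp R = H \ {y} := by
  obtain ⟨c, hc, rfl⟩ := hH.exists_isCycle hy
  have hxz' : nbrsIn G y (supp c) = {x, z} :=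
    (Set.eq_of_subset_of_ncard_le (Set.pair_subset hx hz)
      (by rw [hH.2.2.2 y hy, Set.ncard_pair hxz]) (hH.1.subset fun _ h => h.1)).symm
  rw [nbrsIn_supp_eq_of_isChordless (hH.isChordless hc) c.start_mem_support,
    hc.neighborSet_toSubgraph_endpoint, ← IsCycle.penultimate_tail hc,
    Set.pair_eq_pair_iff] at hxz'
  have hR : supp c.tail.dropLast = supp c \ {y} := by
    ext w; exact IsCycle.mem_support_tail_dropLast hc
  rcases hxz' with ⟨h₁, h₂⟩ | ⟨h₁, h₂⟩
  · exact ⟨c.tail.dropLast.copy h₁ h₂, (isPath_copy _ _ _).mpr hc.isPath_tail.dropLast,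
      by rw [supp_copy, hR]⟩
  · exact ⟨c.tail.dropLast.reverse.copy h₂ h₁,
      (isPath_copy _ _ _).mpr hc.isPath_tail.dropLast.reverse, by rw [supp_copy, supp_reverse, hR]⟩

lemma IsHole.isChordless_of_union {p q : V} {A B : G.Walk p q} (hH : IsHole G (supp A ∪ supp B))
    (hA : A.IsPath) (hB : B.IsPath) (hAB : InternallyDisjoint A B) (hpq : p ≠ q)
    (hnadj : ¬ G.Adj p q) : A.IsChordless := by
  have hc := isCycle_append_reverse hA hB hAB (two_le_length_of_not_adj A hpq hnadj)
  have hch := IsHole.isChordless (by rwa [supp_append, supp_reverse]) hc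
  refine isChordless_iff_forall_mem_edges.mpr fun w w' hw hw' hadj => ?_
  have he := hch.mem_edges (by simp [hw]) (by simp [hw']) hadj
  rw [edges_append, List.mem_append, edges_reverse, List.mem_reverse] at he
  refine he.resolve_right fun heB => ?_
  have hwB := B.fst_mem_support_of_mem_edges heB
  have hw'B := B.snd_mem_support_of_mem_edges heB
  rcases hAB w hw hwB with rfl | rfl <;> rcases hAB w' hw' hw'B with rfl | rfl
  · exact G.loopless.irrefl _ hadj
  · exact hnadj hadj
  · exact hnadj hadj.symm
  · exact G.loopless.irrefl _ hadj

lemma isChordless_append_reverse_cons_cons_nil {p q v : V} {A : G.Walk p q}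
    (hch : A.IsChordless) (hpv : G.Adj p v) (hvq : G.Adj v q)
    (hv : ∀ w ∈ A.support, G.Adj v w → w = p ∨ w = q) :
    (A.append (cons hpv (cons hvq nil)).reverse).IsChordless := by
  set P := cons hpv (cons hvq nil)
  have hmem : ∀ w ∈ (A.append P.reverse).support, w ∈ A.support ∨ w = v := fun w hw => by
    rw [mem_support_append_iff, support_reverse, List.mem_reverse] at hw
    rcases hw with hw | hw
    · exact Or.inl hw
    simp only [P, support_cons, support_nil, List.mem_cons, List.not_mem_nil, or_false] at hw
    rcases hw with rfl | rfl | rfl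
    · exact Or.inl A.start_mem_support
    · exact Or.inr rfl
    · exact Or.inl A.end_mem_support
  have hedges : ∀ {w w'}, s(w, w') ∈ A.edges ∨ s(w, w') = s(p, v) ∨ s(w, w') = s(q, v) →
      s(w, w') ∈ (A.append P.reverse).edges := fun h => by
    simpa [edges_append, edges_reverse, P, or_comm, or_left_comm] using h
  refine isChordless_iff_forall_mem_edges.mpr fun w w' hw hw' hadj => hedges ?_
  rcases hmem w hw with hwA | rfl <;> rcases hmem w' hw' with hw'A | rfl
  · exact Or.inl (hch.mem_edges hwA hw'A hadj)
  · rcases hv w hwA hadj.symm with rfl | rfl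
    · exact Or.inr (Or.inl rfl)
    · exact Or.inr (Or.inr rfl)
  · rcases hv w' hw'A hadj with rfl | rfl
    · exact Or.inr (Or.inl Sym2.eq_swap)
    · exact Or.inr (Or.inr Sym2.eq_swap)
  · exact absurd hadj (G.loopless.irrefl _)

lemma isHole_of_isChordless_of_nbrs_eq_ends {p q v : V} {A : G.Walk p q} (hA : A.IsPath)
    (hch : A.IsChordless) (hpq : p ≠ q) (hnadj : ¬ G.Adj p q) (hvA : v ∉ A.support)
    (hpv : G.Adj p v) (hvq : G.Adj v q) (hv : ∀ w ∈ A.support, G.Adj v w → w = p ∨ w = q) :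
    IsHole G (supp A ∪ supp (cons hpv (cons hvq nil))) := by
  set P := cons hpv (cons hvq nil)
  have hlen := two_le_length_of_not_adj A hpq hnadj
  have hc := isCycle_append_reverse hA (isPath_cons_cons_nil hpv hvq hpq)
    (internallyDisjoint_cons_cons_nil hvA hpv hvq) hlen
  rw [← supp_reverse P, ← supp_append]
  refine IsCycle.isHole_supp hc (isChordless_append_reverse_cons_cons_nil hch hpv hvq hv) ?_
  have hsub : insert v (supp A) ⊆ supp (A.append P.reverse) := by
    rw [supp_append, supp_reverse]
    exact Set.insert_subset (Or.inr (by simp [supp, P])) Set.subset_union_left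
  have := Set.ncard_le_ncard hsub (A.append P.reverse).support.finite_toSet
  rw [Set.ncard_insert_of_notMem (s := supp A) hvA A.support.finite_toSet,
    IsPath.ncard_supp hA] at this
  omega

lemma hasTheta_of_nbrsIn_eq_pair {H : Set V} (hH : IsHole G H) {p q v : V} (hvH : v ∉ H)
    (hpq : p ≠ q) (hnadj : ¬ G.Adj p q) (hv : nbrsIn G v H = {p, q}) : HasTheta G := by
  have hp : p ∈ nbrsIn G v H := hv ▸ Set.mem_insert p {q}
  have hq : q ∈ nbrsIn G v H := hv ▸ Set.mem_insert_of_mem p rfl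
  have hvpq : ∀ w ∈ H, G.Adj v w → w = p ∨ w = q := fun w hw hvw =>
    (hv ▸ ⟨hw, hvw⟩ : w ∈ ({p, q} : Set V))
  obtain ⟨A, B, hA, hB, hAB, rfl⟩ := hH.exists_arcs hp.1 hq.1 hpq
  have hvA : v ∉ A.support := fun h => hvH (Or.inl h)
  have hvB : v ∉ B.support := fun h => hvH (Or.inr h)
  refine ⟨p, q, A, B, cons hp.2.symm (cons hq.2 nil), hpq, hnadj, hA, hB,
    isPath_cons_cons_nil _ _ hpq, two_le_length_of_not_adj A hpq hnadj,
    two_le_length_of_not_adj B hpq hnadj, by simp, hAB, internallyDisjoint_cons_cons_nil hvA _ _,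
    internallyDisjoint_cons_cons_nil hvB _ _, hH, ?_, ?_⟩
  · exact isHole_of_isChordless_of_nbrs_eq_ends hA (hH.isChordless_of_union hA hB hAB hpq hnadj)
      hpq hnadj hvA _ _ fun w hw => hvpq w (Or.inl hw)
  · exact isHole_of_isChordless_of_nbrs_eq_ends hB
      ((Set.union_comm _ _ ▸ hH).isChordless_of_union hB hA hAB.symm hpq hnadj)
      hpq hnadj hvB _ _ fun w hw => hvpq w (Or.inr hw)

lemma IsHole.exists_isPath_supp_eq_diff_triple {H : Set V} (hH : IsHole G H) {x y z : V}
    (hy : y ∈ H) (hx : x ∈ nbrsIn G y H) (hz : z ∈ nbrsIn G y H) (hxz : x ≠ z) :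
    ∃ (a b : V) (P : G.Walk a b), P.IsPath ∧ G.Adj x a ∧ G.Adj b z ∧ supp P = H \ {x, y, z} := by
  obtain ⟨R, hR, hRsupp⟩ := hH.exists_isPath_supp_eq_diff hy hx hz hxz
  have hlen : 2 ≤ R.length := by
    have := IsPath.ncard_supp hR
    rw [hRsupp, Set.ncard_sdiff_singleton_of_mem hy] at this
    have := hH.2.1; omega
  refine ⟨_, _, R.tail.dropLast, hR.tail.dropLast, R.adj_snd ?_, R.tail.adj_penultimate ?_, ?_⟩
  · rw [← length_eq_zero_iff]; omega
  · rw [← length_eq_zero_iff, length_tail]; omega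
  ext w
  have : w ∈ R.support ↔ w ∈ H \ {y} := by rw [← hRsupp]; rfl
  change w ∈ R.tail.dropLast.support ↔ _
  rw [IsPath.mem_support_tail_dropLast hR hlen, this]
  simp only [Set.mem_sdiff, Set.mem_singleton_iff, Set.mem_insert_iff]
  tauto

lemma hasTurtle_of_isCloneOf {H : Set V} (hH : IsHole G H) {u v y : V} (hu : IsCloneOf G u y H)
    (hvH : v ∉ H) (huv : G.Adj u v) (hvu : ∀ w ∈ H, G.Adj u w → ¬ G.Adj v w)
    (h3 : 3 ≤ (nbrsIn G v H).ncard) : HasTurtle G := by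
  obtain ⟨huH, x, z, hxH, hyH, hzH, hxy, hyz, hxz, hN⟩ := hu
  obtain ⟨a, b, P₂, hP₂path, hxa, hbz, hP₂supp⟩ :=
    hH.exists_isPath_supp_eq_diff_triple hyH ⟨hxH, hxy.symm⟩ ⟨hzH, hyz⟩ hxz
  set N := nbrsIn G u H
  set P₁ := cons hxy (cons hyz nil)
  have hP₁ : ∀ w, w ∈ P₁.support ↔ w ∈ N := fun w => by simp [P₁, N, hN]
  have hP₂ : ∀ w, w ∈ P₂.support ↔ w ∈ H ∧ w ∉ N := fun w => by
    rw [hN]; exact Set.ext_iff.mp hP₂supp w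
  have hNH : ∀ w ∈ N, w ∈ H := fun w hw => hw.1
  refine ⟨x, z, a, b, u, v, P₁, P₂, isPath_cons_cons_nil hxy hyz hxz, hP₂path,
    fun w h₁ h₂ => ((hP₂ w).mp h₂).2 ((hP₁ w).mp h₁), hxa, hbz.symm, huv,
    fun h => huH (hNH u ((hP₁ u).mp h)), fun h => huH ((hP₂ u).mp h).1,
    fun h => hvH (hNH v ((hP₁ v).mp h)), fun h => hvH ((hP₂ v).mp h).1, ?_, ?_,
    fun w hw hadj => ((hP₂ w).mp hw).2 ⟨((hP₂ w).mp hw).1, hadj⟩, ?_,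
    fun w hw => hvu w (hNH w ((hP₁ w).mp hw)) ((hP₁ w).mp hw).2⟩
  · convert hH using 1
    ext w
    change w ∈ P₁.support ∨ w ∈ P₂.support ↔ w ∈ H
    rw [hP₁, hP₂]
    exact ⟨fun h => h.elim (hNH w) And.left, fun hw => (em (w ∈ N)).imp id (⟨hw, ·⟩)⟩
  · have : nbrsIn G u (supp P₁) = N := by
      ext w; exact ⟨fun h => (hP₁ w).mp h.1, fun h => ⟨(hP₁ w).mpr h, h.2⟩⟩
    rw [this, hN, Set.ncard_eq_three.mpr ⟨x, y, z, hxy.ne, hxz, hyz.ne, rfl⟩]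
  · have : nbrsIn G v (supp P₂) = nbrsIn G v H := by
      ext w
      exact ⟨fun h => ⟨((hP₂ w).mp h.1).1, h.2⟩,
        fun h => ⟨(hP₂ w).mpr ⟨h.1, fun hw => hvu w h.1 hw.2 h.2⟩, h.2⟩⟩
    rwa [this]

lemma isMinorFor_of_nbrsIn_subset_edge {H : Set V} (hH : IsHole G H) {v p q : V} (hvH : v ∉ H)
    (hne : (nbrsIn G v H).Nonempty) (hp : p ∈ H) (hq : q ∈ H) (hpq : G.Adj p q)
    (hsub : nbrsIn G v H ⊆ {p, q}) : IsMinorFor G v H := by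
  obtain ⟨a, ha, haq⟩ := Set.exists_ne_of_one_lt_ncard (by rw [hH.2.2.2 p hp]; norm_num) q
  exact ⟨hvH, hne, a, p, q, ha.1, hp, hq, ha.2.symm, hpq, haq, hsub.trans (Set.subset_insert _ _)⟩

lemma IsMajorFor.exists_nbrsIn_eq_pair {H : Set V} (hH : IsHole G H) {v : V}
    (hv : IsMajorFor G v H) (h3 : (nbrsIn G v H).ncard < 3) :
    ∃ p q, p ≠ q ∧ ¬ G.Adj p q ∧ nbrsIn G v H = {p, q} := by
  obtain ⟨hvH, hne, hmajor⟩ := hv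
  have hpos := (Set.ncard_pos (hH.1.subset fun _ h => h.1)).mpr hne
  obtain h1 | h2 : (nbrsIn G v H).ncard = 1 ∨ (nbrsIn G v H).ncard = 2 := by omega
  · obtain ⟨p, hp⟩ := Set.ncard_eq_one.mp h1
    have hpH : p ∈ H := (hp ▸ Set.mem_singleton p : p ∈ nbrsIn G v H).1
    obtain ⟨q, hqH, hpq⟩ := Set.nonempty_of_ncard_ne_zero (s := nbrsIn G p H)
      (by rw [hH.2.2.2 p hpH]; simp)
    exact absurd (isMinorFor_of_nbrsIn_subset_edge hH hvH hne hpH hqH hpq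
      (hp ▸ Set.singleton_subset_iff.mpr (Set.mem_insert p _))) hmajor
  · obtain ⟨p, q, hpq, hpair⟩ := Set.ncard_eq_two.mp h2
    refine ⟨p, q, hpq, fun hadj => hmajor ?_, hpair⟩
    have hp : p ∈ nbrsIn G v H := hpair ▸ Set.mem_insert p {q}
    have hq : q ∈ nbrsIn G v H := hpair ▸ Set.mem_insert_of_mem p rfl
    exact isMinorFor_of_nbrsIn_subset_edge hH hvH hne hp.1 hq.1 hadj hpair.subset

end

theorem clone_major_common_neighbor_general {V : Type*} (G : SimpleGraph V)
    (hG : TPPTFree G) (H : Set V) (hH : IsHole G H) (u v y : V)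
    (hv : IsMajorFor G v H) (hu : IsCloneOf G u y H)
    (huv : G.Adj u v) :
    ∃ w ∈ H, G.Adj u w ∧ G.Adj v w := by
  by_contra! hvu
  rcases le_or_gt 3 (nbrsIn G v H).ncard with h3 | h3
  · exact hG.2.2.2 (hasTurtle_of_isCloneOf hH hu hv.1 huv hvu h3)
  · obtain ⟨p, q, hpq, hnadj, hpair⟩ := hv.exists_nbrsIn_eq_pair hH h3
    exact hG.1 (hasTheta_of_nbrsIn_eq_pair hH hv.1 hpq hnadj hpair)

/-- In a (theta, pyramid, prism, turtle)-free graph, if `v` is major for a hole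
`H`, `u` is a clone of `y` in `H`, `uv ∈ E(G)` and `yv ∉ E(G)`, then `u` and `v`
have a common neighbor in `H`. -/
theorem clone_major_common_neighbor {V : Type*} (G : SimpleGraph V)
    (hG : TPPTFree G) (H : Set V) (hH : IsHole G H) (u v y : V)
    (hv : IsMajorFor G v H) (hu : IsCloneOf G u y H)
    (huv : G.Adj u v) (hyv : ¬ G.Adj y v) :
    ∃ w ∈ H, G.Adj u w ∧ G.Adj v w :=
  clone_major_common_neighbor_general G hG H hH u v y hv hu huv

end Paper
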